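/- Let A be an m×n real matrix satisfying the RIP of order t with constant δ_t, let μ > 0, let q ∈ ℝⁿ and U ⊆ {1,…,n} with |U ∪ supp(q)| ≤ t. Then ‖((I − μAᵀA)q)_U‖₂ ≤ (|μ−1| + μδ_t)·‖q‖₂. -/

import Mathlib

open Finset Matrix

/-- Euclidean norm of a finitely-indexed real vector. -/
noncomputable def nrm {ι : Type*} [Fintype ι] (x : ι → ℝ) : ℝ :=
  Real.sqrt (∑ i, x i ^ 2)

open Classical in
/-- Support of a vector as a finite set of indices. -/
noncomputable def spt {n : ℕ} (x : Fin n → ℝ) : Finset (Fin n) :=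
  Finset.univ.filter fun i => x i ≠ 0

/-- Restriction of a vector to an index set: keep entries in `U`, zero the rest. -/
def restr {n : ℕ} (x : Fin n → ℝ) (U : Finset (Fin n)) : Fin n → ℝ :=
  fun i => if i ∈ U then x i else 0

/-- `A` satisfies the RIP of order `t` with constant `δ`. -/
def RIP {m n : ℕ} (A : Matrix (Fin m) (Fin n) ℝ) (t : ℕ) (δ : ℝ) : Prop :=
  ∀ x : Fin n → ℝ, (spt x).card ≤ t →
    (1 - δ) * nrm x ^ 2 ≤ nrm (A.mulVec x) ^ 2 ∧
      nrm (A.mulVec x) ^ 2 ≤ (1 + δ) * nrm x ^ 2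

/-! Put `v = ((I - μAᵀA)q)_U`. As `v` is supported in `U`,
`‖v‖² = ⟨v, (I - μAᵀA)q⟩ = (1 - μ)⟨v, q⟩ + μ(⟨v, q⟩ - ⟨Av, Aq⟩)`.
Cauchy–Schwarz bounds the first term by `|μ - 1|‖v‖‖q‖`. The vectors `v` and `q` are jointly
supported in `U ∪ supp q`, so RIP, through polarization, bounds the second by `μδ‖v‖‖q‖`.
Dividing by `‖v‖` gives the claim. -/

lemma nrm_eq_sqrt_dotProduct {ι : Type*} [Fintype ι] (x : ι → ℝ) : nrm x = √(x ⬝ᵥ x) := by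
  simp only [nrm, dotProduct, sq]

lemma dotProduct_self_nonneg {ι : Type*} [Fintype ι] (x : ι → ℝ) : 0 ≤ x ⬝ᵥ x :=
  Fintype.sum_nonneg fun i => mul_self_nonneg (x i)

lemma nrm_sq {ι : Type*} [Fintype ι] (x : ι → ℝ) : nrm x ^ 2 = x ⬝ᵥ x := by
  rw [nrm_eq_sqrt_dotProduct, Real.sq_sqrt (dotProduct_self_nonneg x)]

lemma nrm_nonneg {ι : Type*} [Fintype ι] (x : ι → ℝ) : 0 ≤ nrm x := Real.sqrt_nonneg _

lemma nrm_pos {ι : Type*} [Fintype ι] {x : ι → ℝ} (hx : x ≠ 0) : 0 < nrm x := by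
  rw [nrm_eq_sqrt_dotProduct, Real.sqrt_pos]
  exact (dotProduct_self_nonneg x).lt_of_ne' (dotProduct_self_eq_zero.not.2 hx)

lemma nrm_smul_sq {ι : Type*} [Fintype ι] (c : ℝ) (x : ι → ℝ) :
    nrm (c • x) ^ 2 = c ^ 2 * nrm x ^ 2 := by
  rw [nrm_sq, nrm_sq, smul_dotProduct, dotProduct_smul, smul_eq_mul, smul_eq_mul, ← mul_assoc, sq]

lemma abs_dotProduct_le_nrm_mul_nrm {ι : Type*} [Fintype ι] (x y : ι → ℝ) :
    |x ⬝ᵥ y| ≤ nrm x * nrm y := by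
  rw [nrm, nrm, ← Real.sqrt_mul (sum_nonneg fun i _ => sq_nonneg _)]
  exact Real.abs_le_sqrt (sum_mul_sq_le_sq_mul_sq univ x y)

lemma mem_spt {n : ℕ} {x : Fin n → ℝ} {i : Fin n} : i ∈ spt x ↔ x i ≠ 0 := by
  simp [spt]

lemma spt_add_subset {n : ℕ} (x y : Fin n → ℝ) : spt (x + y) ⊆ spt x ∪ spt y := by
  intro i
  simp only [mem_union, mem_spt, Pi.add_apply]
  contrapose!
  rintro ⟨hx, hy⟩
  rw [hx, hy, add_zero]

lemma spt_sub_subset {n : ℕ} (x y : Fin n → ℝ) : spt (x - y) ⊆ spt x ∪ spt y := by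
  intro i
  simp only [mem_union, mem_spt, Pi.sub_apply]
  contrapose!
  rintro ⟨hx, hy⟩
  rw [hx, hy, sub_zero]

lemma spt_smul_subset {n : ℕ} (c : ℝ) (x : Fin n → ℝ) : spt (c • x) ⊆ spt x := fun i => by
  simp only [mem_spt, Pi.smul_apply, smul_eq_mul]
  exact right_ne_zero_of_mul

lemma spt_restr_subset {n : ℕ} (x : Fin n → ℝ) (U : Finset (Fin n)) : spt (restr x U) ⊆ U :=
  fun i => by
    simp only [mem_spt, restr]
    contrapose!
    exact fun hi => if_neg hi

lemma restr_dotProduct_restr {n : ℕ} (x : Fin n → ℝ) (U : Finset (Fin n)) :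
    restr x U ⬝ᵥ restr x U = restr x U ⬝ᵥ x :=
  sum_congr rfl fun i _ => by by_cases hi : i ∈ U <;> simp [restr, hi]

namespace RIP

variable {m n : ℕ} {A : Matrix (Fin m) (Fin n) ℝ} {t : ℕ} {δ : ℝ}

lemma nonneg (hRIP : RIP A t δ) {x : Fin n → ℝ} (hx : x ≠ 0) (hcard : (spt x).card ≤ t) :
    0 ≤ δ := by
  obtain ⟨hlow, hup⟩ := hRIP x hcard
  nlinarith [pow_pos (nrm_pos hx) 2]

/-- Polarization: `4 ⟪Ax, Ay⟫ = ‖A(x + y)‖² - ‖A(x - y)‖²`, and RIP controls both terms. -/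
lemma abs_dotProduct_sub_le_half_sq (hRIP : RIP A t δ) {x y : Fin n → ℝ}
    (hcard : (spt x ∪ spt y).card ≤ t) :
    |A *ᵥ x ⬝ᵥ A *ᵥ y - x ⬝ᵥ y| ≤ δ * (nrm x ^ 2 + nrm y ^ 2) / 2 := by
  obtain ⟨hadd_low, hadd_up⟩ := hRIP (x + y) ((card_le_card (spt_add_subset x y)).trans hcard)
  obtain ⟨hsub_low, hsub_up⟩ := hRIP (x - y) ((card_le_card (spt_sub_subset x y)).trans hcard)
  simp only [nrm_sq, mulVec_add, mulVec_sub, add_dotProduct, dotProduct_add, sub_dotProduct,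
    dotProduct_sub, dotProduct_comm y x, dotProduct_comm (A *ᵥ y) (A *ᵥ x)] at *
  rw [abs_le]
  constructor <;> nlinarith

/-- Rescaling `x ↦ a • x`, `y ↦ a⁻¹ • y` leaves both dot products unchanged; with
`a ^ 2 = ‖y‖ / ‖x‖` the bound above becomes the geometric mean. -/
lemma abs_dotProduct_sub_le (hRIP : RIP A t δ) {x y : Fin n → ℝ}
    (hcard : (spt x ∪ spt y).card ≤ t) :
    |A *ᵥ x ⬝ᵥ A *ᵥ y - x ⬝ᵥ y| ≤ δ * (nrm x * nrm y) := by
  rcases eq_or_ne x 0 with rfl | hx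
  · simp [nrm]
  rcases eq_or_ne y 0 with rfl | hy
  · simp [nrm]
  have hxpos := nrm_pos hx
  have hypos := nrm_pos hy
  set a := Real.sqrt (nrm y / nrm x)
  have ha : a ^ 2 = nrm y / nrm x := Real.sq_sqrt (div_pos hypos hxpos).le
  have ha0 : a ≠ 0 := (Real.sqrt_pos.2 (div_pos hypos hxpos)).ne'
  have hcard' : (spt (a • x) ∪ spt (a⁻¹ • y)).card ≤ t :=
    (card_le_card (union_subset_union (spt_smul_subset _ _) (spt_smul_subset _ _))).trans hcard
  have hscaled := hRIP.abs_dotProduct_sub_le_half_sq hcard'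
  have hax : nrm (a • x) ^ 2 = nrm x * nrm y := by
    rw [nrm_smul_sq, ha]; field_simp
  have hay : nrm (a⁻¹ • y) ^ 2 = nrm x * nrm y := by
    rw [nrm_smul_sq, inv_pow, ha]; field_simp
  simp only [mulVec_smul, smul_dotProduct, dotProduct_smul, smul_eq_mul, ← mul_assoc,
    inv_mul_cancel₀ ha0, one_mul, hax, hay] at hscaled
  linarith

end RIP

theorem stmt_6 {m n : ℕ} (A : Matrix (Fin m) (Fin n) ℝ) (t : ℕ) (δ : ℝ)
    (hRIP : RIP A t δ) (μ : ℝ) (hμ : 0 < μ)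
    (q : Fin n → ℝ) (U : Finset (Fin n)) (hsupp : (U ∪ spt q).card ≤ t) :
    nrm (restr (q - μ • Matrix.mulVec Aᵀ (A.mulVec q)) U) ≤
      (|μ - 1| + μ * δ) * nrm q := by
  rcases eq_or_ne q 0 with rfl | hq
  · simp [restr, nrm]
  set v := restr (q - μ • Aᵀ *ᵥ (A *ᵥ q)) U
  have hrip : |A *ᵥ v ⬝ᵥ A *ᵥ q - v ⬝ᵥ q| ≤ δ * (nrm v * nrm q) := hRIP.abs_dotProduct_sub_le
    ((card_le_card (union_subset_union (spt_restr_subset _ U) subset_rfl)).trans hsupp)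
  have hδ := hRIP.nonneg hq ((card_le_card subset_union_right).trans hsupp)
  have hsq : nrm v * nrm v ≤ (|μ - 1| + μ * δ) * nrm q * nrm v := calc
    nrm v * nrm v = (1 - μ) * (v ⬝ᵥ q) + μ * (v ⬝ᵥ q - A *ᵥ v ⬝ᵥ A *ᵥ q) := by
      rw [← sq, nrm_sq, restr_dotProduct_restr, dotProduct_sub, dotProduct_smul,
        dotProduct_mulVec, vecMul_transpose, smul_eq_mul]
      ring
    _ ≤ |1 - μ| * |v ⬝ᵥ q| + μ * |A *ᵥ v ⬝ᵥ A *ᵥ q - v ⬝ᵥ q| := by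
      refine add_le_add ((le_abs_self _).trans (abs_mul _ _).le) ?_
      exact mul_le_mul_of_nonneg_left ((le_abs_self _).trans (abs_sub_comm _ _).le) hμ.le
    _ ≤ |1 - μ| * (nrm v * nrm q) + μ * (δ * (nrm v * nrm q)) := by
      gcongr
      exact abs_dotProduct_le_nrm_mul_nrm v q
    _ = (|μ - 1| + μ * δ) * nrm q * nrm v := by rw [abs_sub_comm]; ring
  rcases (nrm_nonneg v).eq_or_lt with hv0 | hvpos
  · rw [← hv0]
    exact mul_nonneg (add_nonneg (abs_nonneg _) (mul_nonneg hμ.le hδ)) (nrm_nonneg q)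
  · exact le_of_mul_le_mul_right hsq hvpos
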